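/- Assume ρ < 1 and let γ ∈ ℂ with 0 < |γ| ≤ ρ². Then the kernel equation, regarded as a cubic polynomial equation in δ, has exactly one root δ (counted with multiplicity) with |δ| < |γ|/2, and that root is nonzero. -/

import Mathlib

/-- The load ρ = λ(ā²+a²)/(2λ̄āa). -/
noncomputable def rhoLoad (a lam : ℝ) : ℝ :=
  lam * ((1-a)^2 + a^2) / (2 * (1-lam) * (1-a) * a)

open Polynomial in
/-- The kernel equation as a cubic polynomial in δ (for fixed γ). -/
noncomputable def kernelCubic (a lam : ℝ) (g : ℂ) : Polynomial ℂ :=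
  C ((lam:ℂ)*(1-(a:ℂ))*(a:ℂ)) * X^3
  + C ((1-(lam:ℂ))*(1-(a:ℂ))*(a:ℂ)*g + (lam:ℂ)*((a:ℂ)^2+(1-(a:ℂ))^2)) * X^2
  - C ((1 - ((1-(lam:ℂ))*((1-(a:ℂ))^2+(a:ℂ)^2) + (lam:ℂ)*(a:ℂ)*(1-(a:ℂ)))) * g) * X
  + C ((1-(lam:ℂ))*(1-(a:ℂ))*(a:ℂ)*g^2)

/-!
Write the kernel cubic as `P(δ) = α δ³ + (β γ + π) δ² - κ γ δ + β γ²` with `α = λāa`,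
`β = λ̄āa`, `π = λ(a² + ā²)` and `κ = 2β + π + α`, so that `ρ = π / (2β)`. Since
`|γ| ≤ ρ² < ρ < 1`, the linear term dominates on the closed disc `|δ| ≤ |γ|/2`: there
`|P(δ) + κγδ| < κ|γ| · |γ|/2` and `|P'(δ) + κγ| ≤ L κ|γ|` for some `L < 1`. Hence the chord map
`δ ↦ δ - P(δ) / P'(0)` sends the closed disc into the open disc and is an `L`-contraction there.
Its fixed point is a root in the open disc; every other root there is also a fixed point, hence
the same one; and this root is simple because `P'` does not vanish on the disc. It is nonzero
because `P(0) = βγ² ≠ 0`.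
-/

open Function Metric Set
open scoped NNReal

namespace Polynomial

theorem rootMultiplicity_eq_one_of_not_isRoot_derivative {R : Type*} [CommRing R] {p : R[X]}
    {t : R} (hp : p ≠ 0) (hroot : p.IsRoot t) (hder : ¬ (derivative p).IsRoot t) :
    p.rootMultiplicity t = 1 := by
  have hpos : 0 < p.rootMultiplicity t := (rootMultiplicity_pos hp).2 hroot
  have hle : ¬ 1 < p.rootMultiplicity t := fun h =>
    hder ((one_lt_rootMultiplicity_iff_isRoot hp).1 h).2
  omega

/-- The chord (simplified Newton) map `z ↦ z - p(z) / p'(0)`, where `p'(0) = p.coeff 1`. -/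
noncomputable def chordMap (p : ℂ[X]) (z : ℂ) : ℂ := z - p.eval z / p.coeff 1

variable {p : ℂ[X]} {r : ℝ} {L : ℝ≥0}

theorem isFixedPt_chordMap_iff (hp : p.coeff 1 ≠ 0) {z : ℂ} :
    IsFixedPt (chordMap p) z ↔ p.IsRoot z := by
  simp [IsFixedPt, chordMap, hp, IsRoot]

theorem hasDerivAt_chordMap (z : ℂ) :
    HasDerivAt (chordMap p) (1 - (derivative p).eval z / p.coeff 1) z :=
  (hasDerivAt_id z).sub ((p.hasDerivAt z).div_const _)

theorem mapsTo_chordMap (hp : p.coeff 1 ≠ 0)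
    (hmaps : ∀ z ∈ closedBall (0 : ℂ) r, ‖p.eval z - p.coeff 1 * z‖ < ‖p.coeff 1‖ * r) :
    MapsTo (chordMap p) (closedBall 0 r) (ball 0 r) := by
  intro z hz
  have hform : chordMap p z = -(p.eval z - p.coeff 1 * z) / p.coeff 1 := by
    rw [chordMap]; field_simp; ring
  rw [mem_ball_zero_iff, hform, norm_div, norm_neg, div_lt_iff₀ (norm_pos_iff.2 hp), mul_comm r]
  exact hmaps z hz

theorem lipschitzOnWith_chordMap (hp : p.coeff 1 ≠ 0)
    (hderiv : ∀ z ∈ closedBall (0 : ℂ) r,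
      ‖(derivative p).eval z - p.coeff 1‖ ≤ L * ‖p.coeff 1‖) :
    LipschitzOnWith L (chordMap p) (closedBall 0 r) := by
  refine (convex_closedBall 0 r).lipschitzOnWith_of_nnnorm_hasDerivWithin_le
    (fun z _ => (hasDerivAt_chordMap z).hasDerivWithinAt) fun z hz => ?_
  have hform : 1 - (derivative p).eval z / p.coeff 1
      = -((derivative p).eval z - p.coeff 1) / p.coeff 1 := by
    field_simp; ring
  rw [← NNReal.coe_le_coe, coe_nnnorm, hform, norm_div, norm_neg,
    div_le_iff₀ (norm_pos_iff.2 hp)]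
  exact hderiv z hz

theorem card_roots_filter_norm_lt_eq_one (hr : 0 ≤ r) (hL : L < 1) (hp : p.coeff 1 ≠ 0)
    (hmaps : ∀ z ∈ closedBall (0 : ℂ) r, ‖p.eval z - p.coeff 1 * z‖ < ‖p.coeff 1‖ * r)
    (hderiv : ∀ z ∈ closedBall (0 : ℂ) r,
      ‖(derivative p).eval z - p.coeff 1‖ ≤ L * ‖p.coeff 1‖) :
    Multiset.card (p.roots.filter (fun z => ‖z‖ < r)) = 1 := by
  have hp0 : p ≠ 0 := fun h => hp (by simp [h])
  have hmapsTo := mapsTo_chordMap hp hmaps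
  have hlip := lipschitzOnWith_chordMap hp hderiv
  obtain ⟨z₀, hz₀, hfix, -⟩ := ContractingWith.exists_fixedPoint'
    isClosed_closedBall.isComplete (hmapsTo.mono_right ball_subset_closedBall)
    ⟨hL, hlip.mapsToRestrict _⟩ (mem_closedBall_self hr) (edist_ne_top _ _)
  have hroot : p.IsRoot z₀ := (isFixedPt_chordMap_iff hp).1 hfix
  have hz₀r : ‖z₀‖ < r := mem_ball_zero_iff.1 (hfix ▸ hmapsTo hz₀)
  have hsimple : p.rootMultiplicity z₀ = 1 := by
    refine rootMultiplicity_eq_one_of_not_isRoot_derivative hp0 hroot fun h => ?_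
    have hle := hderiv z₀ hz₀
    rw [h.eq_zero, zero_sub, norm_neg] at hle
    have h1L : (1 : ℝ) ≤ L := le_of_mul_le_mul_right (by simpa using hle) (norm_pos_iff.2 hp)
    exact hL.not_ge (by exact_mod_cast h1L)
  have hunique : ∀ z ∈ p.roots.filter (fun z => ‖z‖ < r), z₀ = z := by
    intro z hz
    obtain ⟨hzroot, hzr⟩ := Multiset.mem_filter.1 hz
    have hzfix := (isFixedPt_chordMap_iff hp).2 ((mem_roots hp0).1 hzroot)
    have hdist := hlip.dist_le_mul z₀ hz₀ z (mem_closedBall_zero_iff.2 hzr.le)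
    rw [hzfix.eq, hfix.eq] at hdist
    have hL' : (L : ℝ) < 1 := by exact_mod_cast hL
    exact dist_le_zero.1 (by nlinarith [dist_nonneg (x := z₀) (y := z)])
  rw [← Multiset.count_eq_card.2 hunique,
    Multiset.count_filter_of_pos (p := fun z => ‖z‖ < r) hz₀r, count_roots, hsimple]

theorem card_roots_filter_norm_lt_cubic_eq_one {A B K D : ℂ} (hr : 0 ≤ r) (hK : K ≠ 0)
    (hmaps : ‖A‖ * r ^ 3 + ‖B‖ * r ^ 2 + ‖D‖ < ‖K‖ * r)
    (hderiv : 3 * ‖A‖ * r ^ 2 + 2 * ‖B‖ * r < ‖K‖) :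
    Multiset.card ((C A * X ^ 3 + C B * X ^ 2 - C K * X + C D).roots.filter
      (fun z => ‖z‖ < r)) = 1 := by
  have hK' : 0 < ‖K‖ := norm_pos_iff.2 hK
  have hcoeff : (C A * X ^ 3 + C B * X ^ 2 - C K * X + C D).coeff 1 = -K := by
    simp [coeff_C]
  obtain ⟨L, hL⟩ : ∃ L : ℝ≥0, (L : ℝ) = (3 * ‖A‖ * r ^ 2 + 2 * ‖B‖ * r) / ‖K‖ :=
    ⟨⟨_, by positivity⟩, rfl⟩
  refine card_roots_filter_norm_lt_eq_one (L := L) hr ?_ (by rwa [hcoeff, neg_ne_zero])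
    (fun z hz => ?_) fun z hz => ?_
  · rw [← NNReal.coe_lt_coe, hL, NNReal.coe_one, div_lt_one hK']
    exact hderiv
  · have hz' := mem_closedBall_zero_iff.1 hz
    rw [hcoeff, norm_neg]
    calc ‖eval z (C A * X ^ 3 + C B * X ^ 2 - C K * X + C D) - -K * z‖
        = ‖A * z ^ 3 + B * z ^ 2 + D‖ := by
          congr 1
          simp only [eval_add, eval_sub, eval_mul, eval_C, eval_pow, eval_X, neg_mul,
            sub_neg_eq_add]
          ring
      _ ≤ ‖A‖ * ‖z‖ ^ 3 + ‖B‖ * ‖z‖ ^ 2 + ‖D‖ :=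
        norm_add₃_le.trans_eq (by simp only [norm_mul, norm_pow])
      _ ≤ ‖A‖ * r ^ 3 + ‖B‖ * r ^ 2 + ‖D‖ := by gcongr
      _ < ‖K‖ * r := hmaps
  · have hz' := mem_closedBall_zero_iff.1 hz
    rw [hcoeff, norm_neg, hL, div_mul_cancel₀ _ hK'.ne']
    calc ‖eval z (derivative (C A * X ^ 3 + C B * X ^ 2 - C K * X + C D)) - -K‖
        = ‖3 * A * z ^ 2 + 2 * B * z‖ := by
          congr 1
          simp only [derivative_add, derivative_sub, derivative_mul, derivative_C, zero_mul,
            derivative_X_pow, derivative_X, zero_add, eval_add, eval_sub, eval_mul, eval_C,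
            eval_pow, eval_X, eval_one, eval_zero, sub_neg_eq_add]
          ring
      _ ≤ 3 * ‖A‖ * ‖z‖ ^ 2 + 2 * ‖B‖ * ‖z‖ :=
        (norm_add_le _ _).trans_eq (by simp only [norm_mul, norm_pow, Complex.norm_ofNat])
      _ ≤ 3 * ‖A‖ * r ^ 2 + 2 * ‖B‖ * r := by gcongr

end Polynomial

open Polynomial

theorem card_roots_filter_norm_lt_half_eq_one {α β π : ℝ} {g : ℂ} (hα : 0 < α) (hβ : 0 < β)
    (hπβ : π < 2 * β) (hg0 : g ≠ 0) (hg : 2 * β * ‖g‖ < π) :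
    Multiset.card ((C (α : ℂ) * X ^ 3 + C (β * g + π) * X ^ 2
      - C ((2 * β + π + α : ℝ) * g) * X + C (β * g ^ 2)).roots.filter
        (fun z => ‖z‖ < ‖g‖ / 2)) = 1 := by
  have hG : 0 < ‖g‖ := norm_pos_iff.2 hg0
  have hπ : 0 < π := by nlinarith
  have hG1 : ‖g‖ < 1 := by nlinarith
  have hκ : 0 < 2 * β + π + α := by positivity
  have hB : ‖(β : ℂ) * g + π‖ ≤ β * ‖g‖ + π := by
    refine (norm_add_le _ _).trans_eq ?_
    rw [norm_mul, Complex.norm_of_nonneg hβ.le, Complex.norm_of_nonneg hπ.le]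
  refine card_roots_filter_norm_lt_cubic_eq_one (by positivity)
    (mul_ne_zero (Complex.ofReal_ne_zero.2 hκ.ne') hg0) ?_ ?_ <;>
    simp only [norm_mul, norm_pow, Complex.norm_of_nonneg hα.le, Complex.norm_of_nonneg hβ.le,
      Complex.norm_of_nonneg hκ.le]
  · have hgap : 0 < π / 4 + α / 2 - α * ‖g‖ / 8 - β * ‖g‖ / 4 := by nlinarith
    nlinarith [mul_le_mul_of_nonneg_right hB (by positivity : (0 : ℝ) ≤ (‖g‖ / 2) ^ 2),
      mul_pos (mul_pos hG hG) hgap]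
  · have hgap : 0 < 2 * β + α - 3 * α * ‖g‖ / 4 - β * ‖g‖ := by nlinarith
    nlinarith [mul_le_mul_of_nonneg_right hB (by positivity : (0 : ℝ) ≤ ‖g‖), mul_pos hG hgap]

theorem kernelCubic_eq (a lam : ℝ) (g : ℂ) :
    kernelCubic a lam g =
      C ((lam * (1 - a) * a : ℝ) : ℂ) * X ^ 3
      + C (((1 - lam) * (1 - a) * a : ℝ) * g + (lam * ((1 - a) ^ 2 + a ^ 2) : ℝ)) * X ^ 2
      - C ((2 * ((1 - lam) * (1 - a) * a) + lam * ((1 - a) ^ 2 + a ^ 2)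
          + lam * (1 - a) * a : ℝ) * g) * X
      + C (((1 - lam) * (1 - a) * a : ℝ) * g ^ 2) := by
  rw [kernelCubic]
  push_cast
  ring_nf

theorem kernelCubic_eval_zero (a lam : ℝ) (g : ℂ) :
    (kernelCubic a lam g).eval 0 = (1 - lam) * (1 - a) * a * g ^ 2 := by
  simp [kernelCubic]

/-- assume ρ < 1 and 0 < |γ| ≤ ρ². Then the kernel cubic in δ has
exactly one root (with multiplicity) with |δ| < |γ|/2, and that root is nonzero. -/
theorem stmt8 (a lam : ℝ) (ha : 0 < a) (ha1 : a < 1) (hl : 0 < lam) (hl1 : lam < 1)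
    (hρ : rhoLoad a lam < 1)
    (g : ℂ) (hg0 : g ≠ 0) (hg1 : ‖g‖ ≤ (rhoLoad a lam)^2) :
    Multiset.card ((kernelCubic a lam g).roots.filter
        (fun z => ‖z‖ < ‖g‖ / 2)) = 1 ∧
    ∀ z ∈ (kernelCubic a lam g).roots, ‖z‖ < ‖g‖ / 2 → z ≠ 0 := by
  have ha' : 0 < 1 - a := sub_pos.2 ha1
  have hl' : 0 < 1 - lam := sub_pos.2 hl1
  have hρ_eq : rhoLoad a lam = lam * ((1 - a) ^ 2 + a ^ 2) / (2 * ((1 - lam) * (1 - a) * a)) := by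
    rw [rhoLoad]; ring
  have hρ0 : 0 < rhoLoad a lam := by rw [hρ_eq]; positivity
  have hπβ : lam * ((1 - a) ^ 2 + a ^ 2) < 2 * ((1 - lam) * (1 - a) * a) := by
    rwa [hρ_eq, div_lt_one (by positivity)] at hρ
  have hg : 2 * ((1 - lam) * (1 - a) * a) * ‖g‖ < lam * ((1 - a) ^ 2 + a ^ 2) := by
    have : ‖g‖ < rhoLoad a lam := hg1.trans_lt (by nlinarith)
    rwa [hρ_eq, lt_div_iff₀ (by positivity), mul_comm] at this
  refine ⟨?_, fun z hz _ hz0 => ?_⟩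
  · rw [kernelCubic_eq]
    exact card_roots_filter_norm_lt_half_eq_one (by positivity) (by positivity) hπβ hg0 hg
  · have hroot := (mem_roots'.1 hz).2
    rw [hz0, IsRoot, kernelCubic_eval_zero] at hroot
    have hβ : ((1 - lam) * (1 - a) * a : ℂ) ≠ 0 := by
      exact_mod_cast (by positivity : (0 : ℝ) < (1 - lam) * (1 - a) * a).ne'
    exact mul_ne_zero hβ (pow_ne_zero 2 hg0) hroot
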